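/- Let G = (V,E) be a finite connected edge-weighted graph and let F be its laminar family. Then every set S ∈ F induces a connected subgraph in every minimum spanning tree of G; that is, for every MST M of G and every S ∈ F, the subgraph of M induced by the vertex set S is connected. -/

import Mathlib

open SimpleGraph

/-- The threshold subgraph `G_{≤ t}`: same vertices, only edges of weight `≤ t`. -/
def thresholdGraph {V : Type*} (G : SimpleGraph V) (w : Sym2 V → ℝ) (t : ℝ) :
    SimpleGraph V where
  Adj u v := G.Adj u v ∧ w s(u, v) ≤ t
  symm := by
    constructor
    intro u v hv
    exact ⟨hv.1.symm, by rw [Sym2.eq_swap]; exact hv.2⟩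
  loopless := ⟨fun _ hv => G.irrefl hv.1⟩

/-- The strict threshold subgraph `G_{< t}`. -/
def strictThresholdGraph {V : Type*} (G : SimpleGraph V) (w : Sym2 V → ℝ) (t : ℝ) :
    SimpleGraph V where
  Adj u v := G.Adj u v ∧ w s(u, v) < t
  symm := by
    constructor
    intro u v hv
    exact ⟨hv.1.symm, by rw [Sym2.eq_swap]; exact hv.2⟩
  loopless := ⟨fun _ hv => G.irrefl hv.1⟩

/-- The laminar family of an edge-weighted graph: the whole vertex set together with the
vertex sets of the connected components of every threshold subgraph. -/
def laminarFamily {V : Type*} (G : SimpleGraph V) (w : Sym2 V → ℝ) : Set (Set V) :=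
  insert Set.univ
    {S | ∃ (t : ℝ) (C : (thresholdGraph G w t).ConnectedComponent), S = C.supp}

/-- `M` is a spanning tree of `G`. -/
def IsSpanningTree {V : Type*} (G M : SimpleGraph V) : Prop :=
  M ≤ G ∧ M.IsTree

/-- Total weight of (the edges of) a graph. -/
noncomputable def totalWeight {V : Type*} [Finite V] (M : SimpleGraph V)
    (w : Sym2 V → ℝ) : ℝ :=
  ∑ e ∈ M.edgeSet.toFinite.toFinset, w e

/-- `M` is a minimum spanning tree of `G` with respect to the weights `w`. -/
def IsMST {V : Type*} [Finite V] (G : SimpleGraph V) (w : Sym2 V → ℝ)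
    (M : SimpleGraph V) : Prop :=
  IsSpanningTree G M ∧ ∀ M' : SimpleGraph V, IsSpanningTree G M' →
    totalWeight M w ≤ totalWeight M' w

/-- A phylogenetic tree: a finite tree with strictly positive edge lengths and a nonempty
set `L` of labeled vertices, each hidden vertex having degree at least 3. -/
structure PhyloTree (V : Type*) where
  finV : Finite V
  T : SimpleGraph V
  isTree : T.IsTree
  len : Sym2 V → ℝ
  len_pos : ∀ e ∈ T.edgeSet, 0 < len e
  L : Set V
  L_nonempty : L.Nonempty
  hidden_deg : ∀ v, v ∉ L → 3 ≤ (T.neighborSet v).ncard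

namespace PhyloTree

variable {V : Type*}

/-- The unique path between two vertices of the tree. -/
noncomputable def path (P : PhyloTree V) (u v : V) : P.T.Walk u v :=
  (P.isTree.existsUnique_path u v).exists.choose

lemma path_isPath (P : PhyloTree V) (u v : V) : (P.path u v).IsPath :=
  (P.isTree.existsUnique_path u v).exists.choose_spec

/-- The tree distance: the sum of the edge lengths along the unique path. -/
noncomputable def dist (P : PhyloTree V) (u v : V) : ℝ :=
  ((P.path u v).edges.map P.len).sum

lemma dist_comm (P : PhyloTree V) (u v : V) : P.dist u v = P.dist v u := by
  have h : (P.path u v).reverse = P.path v u :=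
    (P.isTree.existsUnique_path v u).unique ((P.path_isPath u v).reverse)
      (P.path_isPath v u)
  unfold dist
  rw [← h, SimpleGraph.Walk.edges_reverse, List.map_reverse, List.sum_reverse]

/-- The tree distance as a symmetric function on unordered pairs. -/
noncomputable def wdist (P : PhyloTree V) : Sym2 V → ℝ :=
  Sym2.lift ⟨fun u v => P.dist u v, fun u v => P.dist_comm u v⟩

/-- The surrogate set of a vertex: the labeled vertices closest to it. -/
def Sg (P : PhyloTree V) (h : V) : Set V :=
  {l | l ∈ P.L ∧ ∀ l' ∈ P.L, P.dist l h ≤ P.dist l' h}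

/-- `s` is the surrogate vertex `Sg_R(h)` of `h` w.r.t. the ranking `R`:
the element of the surrogate set of `h` of smallest `R`-value. -/
def IsSgR (P : PhyloTree V) (R : V → ℕ) (h : V) (s : V) : Prop :=
  s ∈ P.Sg h ∧ ∀ l ∈ P.Sg h, R s ≤ R l

/-- The edge weights of the distance graph of `P` (the complete graph on `↥P.L`). -/
noncomputable def wG (P : PhyloTree V) : Sym2 ↥P.L → ℝ :=
  fun e => P.wdist (e.map Subtype.val)

/-- An edge `e` of the distance graph lying in at least one MST (i.e. an edge of `g`). -/
def mstEdge (P : PhyloTree V) (e : Sym2 ↥P.L) : Prop :=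
  haveI := P.finV
  ∃ M : SimpleGraph ↥P.L, IsMST (⊤ : SimpleGraph ↥P.L) P.wG M ∧ e ∈ M.edgeSet

/-- `δ_max(v)`: the maximum degree of `v` over all MSTs of the distance graph. -/
noncomputable def deltaMax (P : PhyloTree V) (v : ↥P.L) : ℕ :=
  haveI := P.finV
  sSup {d : ℕ | ∃ M : SimpleGraph ↥P.L,
    IsMST (⊤ : SimpleGraph ↥P.L) P.wG M ∧ d = (M.neighborSet v).ncard}

end PhyloTree

/-- The smaller of the two ranks of the endpoints of an edge. -/
def sym2MinR {α : Type*} (R : α → ℕ) : Sym2 α → ℕ :=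
  Sym2.lift ⟨fun a b => min (R a) (R b), fun a b => min_comm _ _⟩

/-- The larger of the two ranks of the endpoints of an edge. -/
def sym2MaxR {α : Type*} (R : α → ℕ) : Sym2 α → ℕ :=
  Sym2.lift ⟨fun a b => max (R a) (R b), fun a b => max_comm _ _⟩

/-- The strict total order `<_R` on edges: first by weight, then by the smaller rank of
the endpoints, then by the larger rank of the endpoints. -/
def edgeLT {α : Type*} (w : Sym2 α → ℝ) (R : α → ℕ) (e f : Sym2 α) : Prop :=
  w e < w f ∨ (w e = w f ∧ (sym2MinR R e < sym2MinR R f ∨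
    (sym2MinR R e = sym2MinR R f ∧ sym2MaxR R e < sym2MaxR R f)))

/-- `M` is the vertex-ranked MST of `G` w.r.t. the ranking `R`: a spanning tree such that
every non-tree edge `{u,v}` of `G` is the `<_R`-greatest edge of the cycle it closes,
i.e. every edge of the `M`-path from `u` to `v` is `<_R`-smaller than `{u,v}`. -/
def IsVRMST {α : Type*} (G : SimpleGraph α) (w : Sym2 α → ℝ) (R : α → ℕ)
    (M : SimpleGraph α) : Prop :=
  IsSpanningTree G M ∧ ∀ u v : α, G.Adj u v → ¬M.Adj u v →
    ∀ p : M.Walk u v, p.IsPath → ∀ f ∈ p.edges, edgeLT w R f s(u, v)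

/-! A non-tree edge of weight `≤ t` is a heaviest edge of the cycle it closes with the MST `M`
(cycle property), so the `M`-path between its endpoints stays in `G_{≤ t}`. Hence `G_{≤ t}` and
`M ⊓ G_{≤ t}` have the same connected components, so each component of `G_{≤ t}` is already
connected in `M`. -/

namespace SimpleGraph

variable {V : Type*}

theorem Reachable.of_forall_adj {G H : SimpleGraph V}
    (h : ∀ u v, G.Adj u v → H.Reachable u v) {u v : V} (huv : G.Reachable u v) :
    H.Reachable u v := by
  rw [reachable_iff_reflTransGen] at huv ⊢
  exact huv.lift' id fun a b hab => (reachable_iff_reflTransGen a b).mp (h a b hab)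

theorem ConnectedComponent.connected_induce_supp_of_le {K H : SimpleGraph V} (hKH : K ≤ H)
    (hadj : ∀ u v, H.Adj u v → K.Reachable u v) (C : H.ConnectedComponent) :
    (K.induce C.supp).Connected := by
  induction C using ConnectedComponent.ind with
  | h v =>
    have hsupp : (H.connectedComponentMk v).supp = (K.connectedComponentMk v).supp := by
      ext u
      simp only [mem_supp_iff, ConnectedComponent.eq]
      exact ⟨Reachable.of_forall_adj hadj, fun h => h.mono hKH⟩
    rw [hsupp]
    exact ConnectedComponent.connected_toSimpleGraph _

section Exchange

variable {M : SimpleGraph V} {u v a b : V}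

theorem edgeSet_sup_edge_deleteEdges (huv : u ≠ v) (e : Sym2 V) :
    ((M ⊔ edge u v).deleteEdges {e}).edgeSet = insert s(u, v) M.edgeSet \ {e} := by
  rw [edgeSet_deleteEdges, edgeSet_sup, edgeSet_edge_of_ne huv, Set.union_singleton]

/-- The exchanged graph stays connected because `uv` closes a cycle through `ab`, and it has as
many edges as `M`. -/
theorem IsTree.sup_edge_deleteEdges [Finite V] (hM : M.IsTree) (huv : ¬M.Adj u v) (hne : u ≠ v)
    {p : M.Walk u v} (hp : p.IsPath) (hab : s(a, b) ∈ p.edges) :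
    ((M ⊔ edge u v).deleteEdges {s(a, b)}).IsTree := by
  set N := M ⊔ edge u v
  have hNvu : N.Adj v u := Or.inr ((edge_adj _ _ _ _).mpr ⟨Or.inr ⟨rfl, rfl⟩, hne.symm⟩)
  have hcycle : (Walk.cons hNvu (p.mapLe le_sup_left)).IsCycle := by
    rw [Walk.cons_isCycle_iff, Walk.edges_mapLe_eq_edges, Sym2.eq_swap]
    exact ⟨hp.mapLe le_sup_left, fun h => huv (p.adj_of_mem_edges h)⟩
  have hreach_ab : (N.deleteEdges {s(a, b)}).Reachable a b :=
    (adj_and_reachable_delete_edges_iff_exists_cycle.mpr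
      ⟨v, _, hcycle, by simp [hab]⟩).2
  have hconn : (N.deleteEdges {s(a, b)}).Connected := by
    refine (connected_iff _).mpr ⟨fun x y => ?_, hM.connected.nonempty⟩
    refine Reachable.of_forall_adj (fun c d hcd => ?_) (hM.connected.preconnected x y)
    by_cases hcd_ab : s(c, d) = s(a, b)
    · rcases Sym2.eq_iff.mp hcd_ab with ⟨rfl, rfl⟩ | ⟨rfl, rfl⟩
      exacts [hreach_ab, hreach_ab.symm]
    · exact Adj.reachable ((deleteEdges_adj ..).mpr ⟨Or.inl hcd, hcd_ab⟩)
  rw [isTree_iff_connected_and_card] at hM ⊢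
  refine ⟨hconn, ?_⟩
  have huvM : s(u, v) ∉ M.edgeSet := huv
  have habM : s(a, b) ∈ M.edgeSet := p.edges_subset_edgeSet hab
  rw [← hM.2, Nat.card_coe_set_eq, Nat.card_coe_set_eq, edgeSet_sup_edge_deleteEdges hne,
    Set.ncard_sdiff_singleton_of_mem (Set.mem_insert_of_mem _ habM),
    Set.ncard_insert_of_notMem huvM]
  simp

end Exchange

end SimpleGraph

open SimpleGraph

section MST

variable {V : Type*} [Finite V] {G M : SimpleGraph V} {w : Sym2 V → ℝ} {u v : V}

theorem totalWeight_sup_edge_deleteEdges (huv : s(u, v) ∉ M.edgeSet) (hne : u ≠ v)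
    {e : Sym2 V} (he : e ∈ M.edgeSet) :
    totalWeight ((M ⊔ edge u v).deleteEdges {e}) w = totalWeight M w + w s(u, v) - w e := by
  classical
  have hfinset : ((M ⊔ edge u v).deleteEdges {e}).edgeSet.toFinite.toFinset =
      (insert s(u, v) M.edgeSet.toFinite.toFinset).erase e := by
    ext f
    simp only [Set.Finite.mem_toFinset, edgeSet_sup_edge_deleteEdges hne, Finset.mem_erase,
      Finset.mem_insert, Set.mem_sdiff, Set.mem_insert_iff, Set.mem_singleton_iff]
    tauto
  rw [totalWeight, totalWeight, hfinset,
    Finset.sum_erase_eq_sub (Finset.mem_insert_of_mem (by simpa using he)),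
    Finset.sum_insert (by simpa using huv), add_comm (w s(u, v))]

/-- The cycle property: otherwise exchanging `e` for `uv` would give a lighter spanning tree. -/
theorem IsMST.weight_le_of_mem_edges (hM : IsMST G w M) (huv : G.Adj u v) (hnadj : ¬M.Adj u v)
    {p : M.Walk u v} (hp : p.IsPath) {e : Sym2 V} (he : e ∈ p.edges) : w e ≤ w s(u, v) := by
  induction e using Sym2.ind with
  | h a b =>
    obtain ⟨⟨hMG, hMtree⟩, hmin⟩ := hM
    have hexchange : IsSpanningTree G ((M ⊔ edge u v).deleteEdges {s(a, b)}) :=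
      ⟨(deleteEdges_le _).trans (sup_le hMG ((edge_le_iff G).mpr (Or.inr huv))),
        hMtree.sup_edge_deleteEdges hnadj huv.ne hp he⟩
    have hle := hmin _ hexchange
    rw [totalWeight_sup_edge_deleteEdges hnadj huv.ne (p.edges_subset_edgeSet he)] at hle
    linarith

theorem IsMST.reachable_inf_thresholdGraph (hM : IsMST G w M) {t : ℝ}
    (huv : (thresholdGraph G w t).Adj u v) : (M ⊓ thresholdGraph G w t).Reachable u v := by
  by_cases hM_uv : M.Adj u v
  · exact Adj.reachable ⟨hM_uv, huv⟩
  obtain ⟨p, hp⟩ := (hM.1.2.connected.preconnected u v).exists_isPath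
  refine ⟨p.transfer _ fun e he => ?_⟩
  rw [edgeSet_inf]
  refine ⟨p.edges_subset_edgeSet he, ?_⟩
  induction e using Sym2.ind with
  | h a b =>
    exact ⟨hM.1.1 (p.adj_of_mem_edges he),
      (hM.weight_le_of_mem_edges huv.1 hM_uv hp he).trans huv.2⟩

end MST

theorem laminarFamily_induce_connected_general {V : Type*} [Finite V] (G : SimpleGraph V)
    (w : Sym2 V → ℝ) (M : SimpleGraph V) (hM : IsMST G w M)
    (S : Set V) (hS : S ∈ laminarFamily G w) :
    (M.induce S).Connected := by
  rcases hS with rfl | ⟨t, C, rfl⟩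
  · exact (induceUnivIso M).connected_iff.mpr hM.1.2.connected
  · exact (C.connected_induce_supp_of_le inf_le_right
      fun _ _ => hM.reachable_inf_thresholdGraph).mono (comap_monotone _ inf_le_left)

/-- every set of the laminar family induces a connected subgraph in every
MST of the graph. -/
theorem laminarFamily_induce_connected {V : Type*} [Finite V] (G : SimpleGraph V)
    (w : Sym2 V → ℝ) (hG : G.Connected) (M : SimpleGraph V) (hM : IsMST G w M)
    (S : Set V) (hS : S ∈ laminarFamily G w) :
    (M.induce S).Connected :=
  laminarFamily_induce_connected_general G w M hM S hS
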